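/- Let φ : G → G' be a surjective group homomorphism with kernel H, let 1 → G → E →^q Γ → 1 and 1 → G' → E' →^{q'} Γ → 1 be group extensions, and let φ̃ : E → E' be a homomorphism restricting to φ on G and satisfying q' ∘ φ̃ = q. Suppose ς : Γ → E' is a homomorphic section of q'. Then E_ς := φ̃⁻¹(ς(Γ)) fits into an exact sequence 1 → H → E_ς → Γ → 1; in particular q restricted to E_ς is surjective and its kernel equals H. -/

import Mathlib

/-!
Since `φ` is compatible with the projections and hits the whole kernel of `q'`, it is
surjective, so every `ς s` has a preimage `α`, which then lies over `s`. An element lies in the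
image of a section exactly when it is the section of its own projection; over `1` this image is
`{1}`, so the kernel of `q` on `φ⁻¹(ς(Γ))` is `ker φ`.
-/

theorem Function.LeftInverse.mem_range_iff {α β : Type*} {f : α → β} {g : β → α}
    (h : Function.LeftInverse g f) (y : β) : y ∈ Set.range f ↔ f (g y) = y :=
  ⟨by rintro ⟨x, rfl⟩; rw [h x], fun hy => ⟨g y, hy⟩⟩

theorem MonoidHom.surjective_of_ker_le_range {E E' Γ : Type*} [Group E] [Group E'] [Group Γ]
    {φ : E →* E'} {q' : E' →* Γ} (hsurj : Function.Surjective (q'.comp φ))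
    (hker : q'.ker ≤ φ.range) : Function.Surjective φ := by
  intro e'
  obtain ⟨β, hβ⟩ := hsurj (q' e')
  have hk : (φ β)⁻¹ * e' ∈ q'.ker := by
    rw [MonoidHom.mem_ker, map_mul, map_inv, ← MonoidHom.comp_apply, hβ, inv_mul_cancel]
  obtain ⟨g, hg⟩ := hker hk
  exact ⟨β * g, by rw [map_mul, hg, mul_inv_cancel_left]⟩

theorem devissage_general {E E' Γ : Type*} [Group E] [Group E'] [Group Γ]
    (q : E →* Γ) (q' : E' →* Γ)
    (hq : Function.Surjective q)
    (φ : E →* E') (hcomp : ∀ e : E, q' (φ e) = q e)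
    (hφsurj : ∀ g' ∈ q'.ker, ∃ g ∈ q.ker, φ g = g')
    (ς : Γ →* E') (hς : ∀ s : Γ, q' (ς s) = s) :
    (∀ s : Γ, ∃ α : E, φ α ∈ Set.range ς ∧ q α = s) ∧
    (∀ α : E, (φ α ∈ Set.range ς ∧ q α = 1) ↔ φ α = 1) := by
  have hφ : Function.Surjective φ := by
    refine MonoidHom.surjective_of_ker_le_range (q' := q') (fun s => ?_) fun g' hg' => ?_
    · obtain ⟨β, hβ⟩ := hq s
      exact ⟨β, (hcomp β).trans hβ⟩
    · obtain ⟨g, -, hg⟩ := hφsurj g' hg'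
      exact ⟨g, hg⟩
  refine ⟨fun s => ?_, fun α => ?_⟩
  · obtain ⟨α, hα⟩ := hφ (ς s)
    exact ⟨α, ⟨s, hα.symm⟩, by rw [← hcomp, hα, hς]⟩
  · rw [Function.LeftInverse.mem_range_iff hς, hcomp]
    constructor
    · rintro ⟨hfix, h1⟩
      rw [← hfix, h1, map_one]
    · intro h1
      have hq1 : q α = 1 := by rw [← hcomp, h1, map_one]
      exact ⟨by rw [hq1, h1, map_one], hq1⟩

/-- Dévissage lemma (group-theoretic form). Given extensions `1 → G → E → Γ → 1` and
`1 → G' → E' → Γ → 1` (with `G = ker q`, `G' = ker q'`), a homomorphism `φ̃ : E → E'`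
over `Γ` restricting to a surjection `φ : G → G'` (whose kernel is `H = ker φ̃`),
and a homomorphic section `ς` of `q'`, the subgroup `E_ς = φ̃⁻¹(ς(Γ))` fits into an
exact sequence `1 → H → E_ς → Γ → 1`: `q` restricted to `E_ς` is surjective and its
kernel is exactly `H`. -/
theorem devissage {E E' Γ : Type*} [Group E] [Group E'] [Group Γ]
    (q : E →* Γ) (q' : E' →* Γ)
    (hq : Function.Surjective q) (hq' : Function.Surjective q')
    (φ : E →* E') (hcomp : ∀ e : E, q' (φ e) = q e)
    (hφsurj : ∀ g' ∈ q'.ker, ∃ g ∈ q.ker, φ g = g')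
    (ς : Γ →* E') (hς : ∀ s : Γ, q' (ς s) = s) :
    (∀ s : Γ, ∃ α : E, φ α ∈ Set.range ς ∧ q α = s) ∧
    (∀ α : E, (φ α ∈ Set.range ς ∧ q α = 1) ↔ φ α = 1) :=
  devissage_general q q' hq φ hcomp hφsurj ς hς
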